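/- Let X be a real Banach space satisfying condition (B) that admits a generating strongly dispersed sequence {x_α}_{α<ω₁} (i.e. [x_α : α<ω₁] = X). Then X has the Separable Complementation Property, and the complemented separable subspaces can be chosen of the form [x_α : α ∈ Γ] for suitable index sets Γ. If X additionally satisfies condition (1-B), then X has the 1-Separable Complementation Property. -/

import Mathlib

open Cardinal Ordinal Set Pointwise

universe u

noncomputable def closedSpan {X : Type u} [SeminormedAddCommGroup X] [NormedSpace ℝ X]
    (s : Set X) : Submodule ℝ X :=
  (Submodule.span ℝ s).topologicalClosure

def IsDispersed {X : Type u} [SeminormedAddCommGroup X] [NormedSpace ℝ X]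
    (x : Ordinal.{u} → X) (lam : Ordinal.{u}) : Prop :=
  ∀ β < lam,
    (⋂ γ ∈ Set.Iio lam, (closedSpan (x '' {α | γ < α ∧ α < lam}) : Set X)) ⊂
      (closedSpan (x '' {α | β < α ∧ α < lam}) : Set X)

def IsStronglyDispersed {X : Type u} [SeminormedAddCommGroup X] [NormedSpace ℝ X]
    (x : Ordinal.{u} → X) (lam : Ordinal.{u}) : Prop :=
  IsDispersed x lam ∧
    (⋂ β ∈ Set.Iio lam, (closedSpan (x '' {α | β < α ∧ α < lam}) : Set X)) = {0}

/-- condition (B) -/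
def CondB (X : Type u) [SeminormedAddCommGroup X] [NormedSpace ℝ X] : Prop :=
  ∀ κ : Cardinal.{u}, κ.IsRegular → ℵ₀ < κ →
    ∀ Z : Ordinal.{u} → Submodule ℝ X,
      (∀ α < κ.ord, IsClosed ((Z α : Set X))) →
      (∀ α β, α ≤ β → β < κ.ord → Z β ≤ Z α) →
      (⋂ α ∈ Set.Iio κ.ord, (Z α : Set X)) = {0} →
      Bornology.IsBounded
        (⋂ α ∈ Set.Iio κ.ord, closure (Metric.closedBall (0:X) 1 + (Z α : Set X)))

/-- condition (1-B) -/
def Cond1B (X : Type u) [SeminormedAddCommGroup X] [NormedSpace ℝ X] : Prop :=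
  ∀ κ : Cardinal.{u}, κ.IsRegular → ℵ₀ < κ →
    ∀ Z : Ordinal.{u} → Submodule ℝ X,
      (∀ α < κ.ord, IsClosed ((Z α : Set X))) →
      (∀ α β, α ≤ β → β < κ.ord → Z β ≤ Z α) →
      (⋂ α ∈ Set.Iio κ.ord, (Z α : Set X)) = {0} →
      (⋂ α ∈ Set.Iio κ.ord, closure (Metric.closedBall (0:X) 1 + (Z α : Set X))) ⊆
        Metric.closedBall (0:X) 1

/-!
Let `Z β` be the closed span of the tail `{x α | β ≤ α < ω₁}`; these decrease to `{0}`. For a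
fixed `u`, the distance from `u` to `Z β` is nondecreasing in `β`, so it attains its supremum at
some countable `θ`. Then `u / dist(u, Z θ)` lies in every `closure (B_X + Z β)`, and condition (B),
in the form `⋂ β, closure (B_X + Z β) ⊆ M • B_X`, gives `‖u‖ ≤ M * dist(u, Z θ)`.

Each initial segment `[x α | α < β]` with `β < ω₁` is separable, so a closing-off argument along
`ω₁` produces a countable limit ordinal `β`, above any given one, such that this bound holds with
`θ = β` on all of `W = [x α | α < β]`. Hence `‖w‖ ≤ M * ‖w + z‖` for `w ∈ W` and `z ∈ Z β`, so
`W + Z β` is closed; it is dense, hence equal to `X`, and the projection onto `W` along `Z β` has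
norm at most `M`. Under (1-B) one can take `M = 1`.
-/

open Metric TopologicalSpace Order Filter Topology

namespace Ordinal

theorem countable_Iio_of_lt_omega_one {β : Ordinal.{u}} (hβ : β < ω₁) : (Iio β).Countable := by
  rw [← Cardinal.le_aleph0_iff_set_countable, Cardinal.mk_Iio_ordinal, Cardinal.lift_le_aleph0,
    ← Cardinal.lt_aleph_one_iff, ← lt_omega_iff_card_lt]
  exact hβ

theorem exists_lt_omega_one_subset_of_countable {α : Type*} {F : Ordinal.{u} → Set α}
    (hF : Monotone F) {D : Set α} (hD : D.Countable) (h : D ⊆ ⋃ b < ω₁, F b) :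
    ∃ b < ω₁, D ⊆ F b := by
  have : ∀ d : D, ∃ b < ω₁, (d : α) ∈ F b := fun d => by simpa using h d.2
  choose g hg hgF using this
  have := hD.to_subtype
  exact ⟨⨆ d, g d, iSup_lt_omega_one hg,
    fun d hd => hF (Ordinal.le_iSup g ⟨d, hd⟩) (hgF ⟨d, hd⟩)⟩

theorem isClosed_biUnion_lt_omega_one {X : Type*} [TopologicalSpace X] [SequentialSpace X]
    {F : Ordinal.{u} → Set X} (hF : Monotone F) (hc : ∀ b, IsClosed (F b)) :
    IsClosed (⋃ b < ω₁, F b) := by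
  refine IsSeqClosed.isClosed fun f p hf hfp => ?_
  obtain ⟨b, hb, hfb⟩ :=
    exists_lt_omega_one_subset_of_countable hF (countable_range f) (range_subset_iff.2 hf)
  exact mem_biUnion hb ((hc b).mem_of_tendsto hfp (Eventually.of_forall fun n => hfb ⟨n, rfl⟩))

theorem _root_.TopologicalSpace.IsSeparable.exists_lt_omega_one_subset {X : Type*}
    [TopologicalSpace X] [PseudoMetrizableSpace X] {F : Ordinal.{u} → Set X} (hF : Monotone F)
    (hc : ∀ b, IsClosed (F b)) {S : Set X} (hS : IsSeparable S) (h : S ⊆ ⋃ b < ω₁, F b) :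
    ∃ b < ω₁, S ⊆ F b := by
  obtain ⟨t, htS, htc, hSt⟩ := hS.exists_countable_dense_subset
  obtain ⟨b, hb, htb⟩ := exists_lt_omega_one_subset_of_countable hF htc (htS.trans h)
  exact ⟨b, hb, hSt.trans ((hc b).closure_subset_iff.2 htb)⟩

theorem exists_forall_le_of_monotone {α : Type*} [TopologicalSpace α] [Preorder α]
    [ClosedIicTopology α] [PseudoMetrizableSpace α] [SeparableSpace α]
    {f : Ordinal.{u} → α} (hf : Monotone f) : ∃ θ < ω₁, ∀ γ < ω₁, f γ ≤ f θ := by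
  obtain ⟨θ, hθ, hsub⟩ := (IsSeparable.of_separableSpace (f '' Iio ω₁)).exists_lt_omega_one_subset
    (F := fun b => Iic (f b)) (fun _ _ hab => Iic_subset_Iic.2 (hf hab)) (fun _ => isClosed_Iic)
    (by rintro _ ⟨γ, hγ, rfl⟩; exact mem_biUnion hγ le_rfl)
  exact ⟨θ, hθ, fun γ hγ => hsub (mem_image_of_mem f hγ)⟩

theorem exists_isSuccLimit_forall_lt_omega_one {P : Ordinal.{u} → Ordinal.{u} → Prop}
    (hP : ∀ ⦃a b c d⦄, a ≤ b → c ≤ d → P b c → P a d) (h : ∀ b < ω₁, ∃ c < ω₁, P b c)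
    {β₀ : Ordinal.{u}} (hβ₀ : β₀ < ω₁) :
    ∃ β, β₀ ≤ β ∧ β < ω₁ ∧ IsSuccLimit β ∧ ∀ b < β, P b β := by
  choose! f hf hPf using h
  set g : Ordinal.{u} → Ordinal.{u} := fun b => max (f b) (succ b)
  set s : ℕ → Ordinal.{u} := fun n => g^[n] β₀
  have hs_succ (n : ℕ) : s (n + 1) = g (s n) := Function.iterate_succ_apply' g n β₀
  have hs (n : ℕ) : s n < ω₁ := by
    induction n with
    | zero => exact hβ₀
    | succ n ih => rw [hs_succ]; exact max_lt (hf _ ih) ((isSuccLimit_omega 1).succ_lt ih)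
  have hs_lt (n : ℕ) : succ (s n) ≤ s (n + 1) :=
    (le_max_right _ _).trans_eq (hs_succ n).symm
  set β := ⨆ n, s n
  have hle (n : ℕ) : s n ≤ β := Ordinal.le_iSup s n
  have hcofinal {b : Ordinal.{u}} (hb : b < β) : ∃ n, succ b ≤ s n ∧ P (s n) β := by
    obtain ⟨n, hn⟩ := Ordinal.lt_iSup_iff.1 hb
    exact ⟨n, succ_le_of_lt hn,
      hP le_rfl (((le_max_left _ _).trans_eq (hs_succ n).symm).trans (hle (n + 1))) (hPf _ (hs n))⟩
  have hsucc_lt {b : Ordinal.{u}} (hb : b < β) : succ b < β := by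
    obtain ⟨n, hn, -⟩ := hcofinal hb
    exact hn.trans_lt ((lt_succ _).trans_le ((hs_lt n).trans (hle (n + 1))))
  refine ⟨β, hle 0, iSup_lt_omega_one hs, ?_, fun b hb => ?_⟩
  · refine isSuccLimit_iff.2 ⟨?_, isSuccPrelimit_of_succ_lt fun b hb => hsucc_lt hb⟩
    exact (bot_le.trans_lt ((lt_succ _).trans_le ((hs_lt 0).trans (hle 1)))).ne'
  · obtain ⟨n, hn, hPn⟩ := hcofinal hb
    exact hP ((le_succ b).trans hn) le_rfl hPn

end Ordinal

section ClosedSpan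

variable {E : Type u} [NormedAddCommGroup E] [NormedSpace ℝ E]

theorem isClosed_closedSpan (s : Set E) : IsClosed (closedSpan s : Set E) :=
  Submodule.isClosed_topologicalClosure _

theorem subset_closedSpan (s : Set E) : s ⊆ closedSpan s :=
  Submodule.subset_span.trans (Submodule.le_topologicalClosure _)

theorem closedSpan_mono {s t : Set E} (h : s ⊆ t) : closedSpan s ≤ closedSpan t :=
  Submodule.topologicalClosure_mono (Submodule.span_mono h)

theorem monotone_closedSpan_image_Iio {ι : Type*} [Preorder ι] (x : ι → E) :
    Monotone fun b => closedSpan (x '' Iio b) :=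
  fun _ _ h => closedSpan_mono (image_mono (Iio_subset_Iio h))

theorem isSeparable_closedSpan {s : Set E} (hs : s.Countable) :
    IsSeparable (closedSpan s : Set E) := by
  rw [closedSpan, Submodule.topologicalClosure_coe]
  exact hs.isSeparable.span.closure

theorem closedSpan_image_Iio_subset_closure_biUnion {ι : Type*} [LinearOrder ι] (x : ι → E) {β : ι}
    (hβ : IsSuccLimit β) :
    (closedSpan (x '' Iio β) : Set E) ⊆ closure (⋃ b < β, (closedSpan (x '' Iio b) : Set E)) := by
  rw [closedSpan, Submodule.topologicalClosure_coe]
  refine closure_mono fun v hv => ?_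
  induction hv using Submodule.span_induction with
  | mem v hv =>
    obtain ⟨α, hα, rfl⟩ := hv
    obtain ⟨b, hb, hαb⟩ := hβ.lt_iff_exists_lt.1 hα
    exact mem_biUnion hb (subset_closedSpan _ (mem_image_of_mem x hαb))
  | zero =>
    obtain ⟨b, hb⟩ := hβ.nonempty_Iio
    exact mem_biUnion hb (zero_mem _)
  | add v w _ _ hv hw =>
    obtain ⟨b, hb, hvb⟩ := mem_iUnion₂.1 hv
    obtain ⟨c, hc, hwc⟩ := mem_iUnion₂.1 hw
    have hmono {a : ι} (h : a ≤ max b c) :=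
      closedSpan_mono (E := E) (image_mono (f := x) (Iio_subset_Iio h))
    exact mem_biUnion (max_lt hb hc)
      (add_mem (hmono (le_max_left b c) hvb) (hmono (le_max_right b c) hwc))
  | smul r v _ hv =>
    obtain ⟨b, hb, hvb⟩ := mem_iUnion₂.1 hv
    exact mem_biUnion hb (Submodule.smul_mem _ r hvb)

end ClosedSpan

section Normed

variable {E : Type*} [NormedAddCommGroup E] [NormedSpace ℝ E]

theorem smul_mem_closure_closedBall_add (Z : Submodule ℝ E) {v : E} {r : ℝ} (hr : 0 < r)
    (h : infDist v Z ≤ r) : r⁻¹ • v ∈ closure (closedBall (0 : E) 1 + (Z : Set E)) := by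
  have hmem : ∀ t ∈ Ioo (0 : ℝ) 1, t • r⁻¹ • v ∈ closedBall (0 : E) 1 + (Z : Set E) := by
    rintro t ⟨ht0, ht1⟩
    have hlt : infDist v Z < r / t := h.trans_lt ((lt_div_iff₀ ht0).2 (by nlinarith))
    obtain ⟨z, hz, hvz⟩ := (infDist_lt_iff ⟨0, Z.zero_mem⟩).1 hlt
    refine ⟨(t * r⁻¹) • (v - z), ?_, (t * r⁻¹) • z, Z.smul_mem _ hz, ?_⟩
    · rw [mem_closedBall_zero_iff, norm_smul, Real.norm_of_nonneg (by positivity), ← dist_eq_norm,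
        mul_assoc, mul_left_comm, inv_mul_le_iff₀ hr, mul_one]
      linarith [(lt_div_iff₀ ht0).1 hvz]
    · beta_reduce
      rw [← smul_add, sub_add_cancel, smul_smul]
  have hlim : Tendsto (fun t : ℝ => t • r⁻¹ • v) (𝓝[<] 1) (𝓝 (r⁻¹ • v)) :=
    ((continuous_id.smul continuous_const).tendsto' 1 _ (one_smul ℝ _)).mono_left
      nhdsWithin_le_nhds
  exact mem_closure_of_tendsto hlim (mem_of_superset (Ioo_mem_nhdsLT zero_lt_one) hmem)

theorem norm_le_mul_infDist_of_forall_infDist_le {ι : Type*} {Z : ι → Submodule ℝ E}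
    {s : Set ι} (hZ : ∀ i ∈ s, IsClosed (Z i : Set E)) (h0 : ⋂ i ∈ s, (Z i : Set E) = {0})
    {M : ℝ} (hM : ⋂ i ∈ s, closure (closedBall (0 : E) 1 + (Z i : Set E)) ⊆ closedBall 0 M) {u : E}
    {j : ι} (hu : ∀ i ∈ s, infDist u (Z i) ≤ infDist u (Z j)) :
    ‖u‖ ≤ M * infDist u (Z j) := by
  rcases (infDist_nonneg (x := u) (s := Z j)).eq_or_lt with hc | hc
  · have hu0 : u ∈ ⋂ i ∈ s, (Z i : Set E) := mem_iInter₂.2 fun i hi =>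
      ((hZ i hi).mem_iff_infDist_zero ⟨0, zero_mem _⟩).2
        (le_antisymm ((hu i hi).trans hc.ge) infDist_nonneg)
    rw [h0, mem_singleton_iff] at hu0
    rw [← hc, mul_zero, hu0, norm_zero]
  · have := hM (mem_iInter₂.2 fun i hi => smul_mem_closure_closedBall_add (Z i) hc (hu i hi))
    rwa [mem_closedBall_zero_iff, norm_smul, Real.norm_of_nonneg (inv_nonneg.2 hc.le),
      inv_mul_le_iff₀ hc, mul_comm] at this

end Normed

section Projection

variable {𝕜 E : Type*} [NontriviallyNormedField 𝕜] [NormedAddCommGroup E] [NormedSpace 𝕜 E]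
  [CompleteSpace E] {W S : Submodule 𝕜 E} {M : ℝ}

theorem isClosed_sup_of_norm_le_mul_norm_add (hW : IsClosed (W : Set E))
    (hS : IsClosed (S : Set E)) (hM : 0 ≤ M) (h : ∀ w ∈ W, ∀ s ∈ S, ‖w‖ ≤ M * ‖w + s‖) :
    IsClosed ((W ⊔ S : Submodule 𝕜 E) : Set E) := by
  have := hW.completeSpace_coe
  have := hS.completeSpace_coe
  let f : W × S →L[𝕜] E := W.subtypeL.coprod S.subtypeL
  have hbound (p : W × S) : ‖p‖ ≤ (⟨M + 1, by positivity⟩ : NNReal) * ‖f p‖ := by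
    obtain ⟨⟨w, hw⟩, ⟨s, hs⟩⟩ := p
    have hws := h w hw s hs
    have hs' : ‖s‖ ≤ ‖w + s‖ + ‖w‖ := by simpa using norm_sub_le (w + s) w
    simp only [Prod.norm_def, Submodule.coe_norm, f,
      ContinuousLinearMap.coprod_apply, Submodule.subtypeL_apply]
    exact max_le (by nlinarith [norm_nonneg (w + s)]) (by nlinarith [norm_nonneg (w + s)])
  have hrange : range f = ((W ⊔ S : Submodule 𝕜 E) : Set E) := by
    ext v
    simp [f, Submodule.mem_sup, eq_comm]
  exact hrange ▸ (f.antilipschitz_of_bound hbound).isClosed_range f.uniformContinuous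

theorem exists_projection_of_norm_le_mul_norm_add (hW : IsClosed (W : Set E))
    (hS : IsClosed (S : Set E)) (hdense : (W ⊔ S).topologicalClosure = ⊤) (hM : 0 ≤ M)
    (h : ∀ w ∈ W, ∀ s ∈ S, ‖w‖ ≤ M * ‖w + s‖) :
    ∃ P : E →L[𝕜] E, (∀ v, P (P v) = P v) ∧ ‖P‖ ≤ M ∧ LinearMap.range (P : E →ₗ[𝕜] E) = W := by
  have hsup : W ⊔ S = ⊤ :=
    (isClosed_sup_of_norm_le_mul_norm_add hW hS hM h).submodule_topologicalClosure_eq ▸ hdense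
  have hdisj : Disjoint W S := Submodule.disjoint_def.2 fun w hw hs =>
    norm_le_zero_iff.1 (by simpa using h w hw (-w) (S.neg_mem hs))
  have hWS : IsCompl W S := ⟨hdisj, codisjoint_iff.2 hsup⟩
  have hbound (v : E) : ‖W.projection S hWS v‖ ≤ M * ‖v‖ := by
    simpa using h _ (W.projection_apply_mem hWS v) _ (W.sub_projection_mem hWS v)
  refine ⟨(W.projection S hWS).mkContinuous M hbound, fun v => ?_,
    LinearMap.mkContinuous_norm_le _ hM _, W.range_projection hWS⟩
  exact (W.projection_eq_self_iff hWS _).2 (W.projection_apply_mem hWS v)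

end Projection

section StronglyDispersed

variable {X : Type u} [NormedAddCommGroup X] [NormedSpace ℝ X] (x : Ordinal.{u} → X)

noncomputable def tailSpan (β : Ordinal.{u}) : Submodule ℝ X :=
  closedSpan (x '' Ico β ω₁)

theorem isClosed_tailSpan (β : Ordinal.{u}) : IsClosed (tailSpan x β : Set X) :=
  isClosed_closedSpan _

theorem tailSpan_antitone : Antitone (tailSpan x) :=
  fun _ _ h => closedSpan_mono (image_mono (Ico_subset_Ico_left h))

theorem biInter_tailSpan_eq_zero (hsd : IsStronglyDispersed x ω₁) :
    ⋂ β ∈ Iio ω₁, (tailSpan x β : Set X) = {0} := by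
  refine subset_antisymm (fun u hu => ?_) (by simp [zero_mem])
  rw [← hsd.2]
  refine mem_iInter₂.2 fun β hβ => ?_
  have := mem_iInter₂.1 hu (succ β) ((isSuccLimit_omega 1).succ_lt hβ)
  rwa [tailSpan, Ico_succ_left] at this

theorem monotone_infDist_tailSpan (u : X) : Monotone fun γ => infDist u (tailSpan x γ) :=
  fun _ _ h => infDist_le_infDist_of_subset (tailSpan_antitone x h) ⟨0, zero_mem _⟩

def tailControlled (M : ℝ) (θ : Ordinal.{u}) : Set X :=
  {u | ‖u‖ ≤ M * infDist u (tailSpan x θ)}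

theorem isClosed_tailControlled (M : ℝ) (θ : Ordinal.{u}) : IsClosed (tailControlled x M θ) :=
  isClosed_le continuous_norm (continuous_const.mul (continuous_infDist_pt _))

theorem monotone_tailControlled {M : ℝ} (hM : 0 ≤ M) : Monotone (tailControlled x M) :=
  fun _ _ h _ hu => hu.trans (mul_le_mul_of_nonneg_left (monotone_infDist_tailSpan x _ h) hM)

theorem exists_subset_closedSpan_Iio (hgen : closedSpan (x '' Iio ω₁) = ⊤) {Y : Set X}
    (hY : IsSeparable Y) : ∃ β < ω₁, Y ⊆ closedSpan (x '' Iio β) := by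
  have hmono : Monotone fun b => (closedSpan (x '' Iio b) : Set X) :=
    fun _ _ h => SetLike.coe_subset_coe.2 (monotone_closedSpan_image_Iio x h)
  have hcover : (closedSpan (x '' Iio ω₁) : Set X) ⊆ ⋃ b < ω₁, (closedSpan (x '' Iio b) : Set X) :=
    (closedSpan_image_Iio_subset_closure_biUnion x (isSuccLimit_omega 1)).trans
      (Ordinal.isClosed_biUnion_lt_omega_one hmono fun _ => isClosed_closedSpan _).closure_subset
  exact hY.exists_lt_omega_one_subset hmono (fun _ => isClosed_closedSpan _)
    fun y _ => hcover (hgen ▸ Submodule.mem_top)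

variable {x} {M : ℝ} (h0 : ⋂ β ∈ Iio ω₁, (tailSpan x β : Set X) = {0})
  (hM : ⋂ β ∈ Iio ω₁, closure (closedBall (0 : X) 1 + (tailSpan x β : Set X)) ⊆ closedBall 0 M)
include h0 hM

theorem exists_mem_tailControlled (u : X) : ∃ θ < ω₁, u ∈ tailControlled x M θ := by
  obtain ⟨θ, hθ, hmax⟩ := Ordinal.exists_forall_le_of_monotone (monotone_infDist_tailSpan x u)
  exact ⟨θ, hθ,
    norm_le_mul_infDist_of_forall_infDist_le (fun β _ => isClosed_tailSpan x β) h0 hM hmax⟩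

theorem exists_closedSpan_Iio_subset_tailControlled (hM0 : 0 ≤ M) {b : Ordinal.{u}}
    (hb : b < ω₁) : ∃ c < ω₁, (closedSpan (x '' Iio b) : Set X) ⊆ tailControlled x M c := by
  have hsep := isSeparable_closedSpan ((Ordinal.countable_Iio_of_lt_omega_one hb).image x)
  refine hsep.exists_lt_omega_one_subset (monotone_tailControlled x hM0)
    (isClosed_tailControlled x M) fun u _ => ?_
  obtain ⟨θ, hθ, hu⟩ := exists_mem_tailControlled h0 hM u
  exact mem_biUnion hθ hu

theorem exists_projection_onto_closedSpan_Iio [CompleteSpace X]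
    (hgen : closedSpan (x '' Iio ω₁) = ⊤) (hM0 : 0 ≤ M) {β₀ : Ordinal.{u}} (hβ₀ : β₀ < ω₁) :
    ∃ β, β₀ ≤ β ∧ β < ω₁ ∧ ∃ P : X →L[ℝ] X, (∀ v, P (P v) = P v) ∧ ‖P‖ ≤ M ∧
      LinearMap.range (P : X →ₗ[ℝ] X) = closedSpan (x '' Iio β) := by
  obtain ⟨β, hβ₀β, hβ, hlim, hcontrol⟩ := Ordinal.exists_isSuccLimit_forall_lt_omega_one
    (P := fun b c => (closedSpan (x '' Iio b) : Set X) ⊆ tailControlled x M c)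
    (fun _ _ _ _ hab hcd h => (SetLike.coe_subset_coe.2 (monotone_closedSpan_image_Iio x hab)).trans
      (h.trans (monotone_tailControlled x hM0 hcd)))
    (fun b hb => exists_closedSpan_Iio_subset_tailControlled h0 hM hM0 hb) hβ₀
  have hW : (closedSpan (x '' Iio β) : Set X) ⊆ tailControlled x M β :=
    (closedSpan_image_Iio_subset_closure_biUnion x hlim).trans
      ((isClosed_tailControlled x M β).closure_subset_iff.2 (iUnion₂_subset hcontrol))
  have hdense : (closedSpan (x '' Iio β) ⊔ tailSpan x β).topologicalClosure = ⊤ := by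
    rw [eq_top_iff, ← hgen]
    refine Submodule.topologicalClosure_mono (Submodule.span_le.2 ?_)
    rintro _ ⟨α, hα, rfl⟩
    rcases lt_or_ge α β with h | h
    · exact Submodule.mem_sup_left (subset_closedSpan _ ⟨α, h, rfl⟩)
    · exact Submodule.mem_sup_right (subset_closedSpan _ ⟨α, ⟨h, hα⟩, rfl⟩)
  have hsplit (w : X) (hw : w ∈ closedSpan (x '' Iio β)) (s : X) (hs : s ∈ tailSpan x β) :
      ‖w‖ ≤ M * ‖w + s‖ := by
    refine (hW hw).trans (mul_le_mul_of_nonneg_left ?_ hM0)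
    simpa [dist_eq_norm] using infDist_le_dist_of_mem (x := w) (neg_mem hs)
  exact ⟨β, hβ₀β, hβ, exists_projection_of_norm_le_mul_norm_add (isClosed_closedSpan _)
    (isClosed_tailSpan x β) hdense hM0 hsplit⟩

theorem exists_separable_complemented_closedSpan [CompleteSpace X]
    (hgen : closedSpan (x '' Iio ω₁) = ⊤) (hM0 : 0 ≤ M) {Y : Submodule ℝ X}
    (hY : IsSeparable (Y : Set X)) :
    ∃ Γ ⊆ Iio ω₁, ∃ P : X →L[ℝ] X, (∀ v, P (P v) = P v) ∧ ‖P‖ ≤ M ∧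
      LinearMap.range (P : X →ₗ[ℝ] X) = closedSpan (x '' Γ) ∧
      IsSeparable (closedSpan (x '' Γ) : Set X) ∧ Y ≤ closedSpan (x '' Γ) := by
  obtain ⟨β₀, hβ₀, hY₀⟩ := exists_subset_closedSpan_Iio x hgen hY
  obtain ⟨β, hβ₀β, hβ, P, hP⟩ := exists_projection_onto_closedSpan_Iio h0 hM hgen hM0 hβ₀
  exact ⟨Iio β, Iio_subset_Iio hβ.le, P, hP.1, hP.2.1, hP.2.2,
    isSeparable_closedSpan ((Ordinal.countable_Iio_of_lt_omega_one hβ).image x),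
    (SetLike.coe_subset_coe.1 hY₀).trans (monotone_closedSpan_image_Iio x hβ₀β)⟩

end StronglyDispersed

theorem stmt10 {X : Type u} [NormedAddCommGroup X] [NormedSpace ℝ X] [CompleteSpace X]
    (hB : CondB X)
    (x : Ordinal.{u} → X)
    (hsd : IsStronglyDispersed x (Cardinal.aleph 1).ord)
    (hgen : closedSpan (x '' Set.Iio (Cardinal.aleph 1).ord) = ⊤) :
    (∀ Y : Submodule ℝ X, TopologicalSpace.IsSeparable (Y : Set X) →
      ∃ Γ ⊆ Set.Iio (Cardinal.aleph 1).ord, ∃ P : X →L[ℝ] X,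
        (∀ v, P (P v) = P v) ∧
        LinearMap.range (P : X →ₗ[ℝ] X) = closedSpan (x '' Γ) ∧
        TopologicalSpace.IsSeparable ((closedSpan (x '' Γ) : Submodule ℝ X) : Set X) ∧
        Y ≤ closedSpan (x '' Γ)) ∧
    (Cond1B X →
      ∀ Y : Submodule ℝ X, TopologicalSpace.IsSeparable (Y : Set X) →
        ∃ Γ ⊆ Set.Iio (Cardinal.aleph 1).ord, ∃ P : X →L[ℝ] X,
          (∀ v, P (P v) = P v) ∧ ‖P‖ ≤ 1 ∧
          LinearMap.range (P : X →ₗ[ℝ] X) = closedSpan (x '' Γ) ∧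
          TopologicalSpace.IsSeparable ((closedSpan (x '' Γ) : Submodule ℝ X) : Set X) ∧
          Y ≤ closedSpan (x '' Γ)) := by
  rw [Cardinal.ord_aleph] at hsd hgen ⊢
  have h0 := biInter_tailSpan_eq_zero x hsd
  have hB' := hB ℵ₁ isRegular_aleph_one aleph0_lt_aleph_one (tailSpan x)
    (fun β _ => isClosed_tailSpan x β) (fun _ _ h _ => tailSpan_antitone x h)
  have h1B' (hC : Cond1B X) := hC ℵ₁ isRegular_aleph_one aleph0_lt_aleph_one (tailSpan x)
    (fun β _ => isClosed_tailSpan x β) (fun _ _ h _ => tailSpan_antitone x h)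
  rw [Cardinal.ord_aleph] at hB' h1B'
  refine ⟨fun Y hY => ?_, fun h1B Y hY => ?_⟩
  · obtain ⟨M, hM0, hM⟩ := (hB' h0).subset_closedBall_lt 0 0
    obtain ⟨Γ, hΓ, P, hP, -, hrest⟩ :=
      exists_separable_complemented_closedSpan h0 hM hgen hM0.le hY
    exact ⟨Γ, hΓ, P, hP, hrest⟩
  · exact exists_separable_complemented_closedSpan h0 (h1B' h1B h0) hgen zero_le_one hY
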